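/- arXiv:1208.2753 — 2 statements merged into one kernel-verified Lean document; each statement's English description precedes it below -/
import Mathlib

section
/- For every core join process J, the Petri net N(J) is 1-safe: every reachable marking assigns at most one token to each place. -/
/-! Core join-calculus syntax. Names are natural numbers. A process is `nil`, a
message `x⟨v⟩`, a parallel composition, or a definition
`def x⟨u⟩ ∥ y⟨v⟩ ▷ R in P`, written `defn x u y v R P`. -/

abbrev Name := ℕ

inductive Proc : Type
  | nil : Proc
  | msg : Name → Name → Proc
  | par : Proc → Proc → Proc
  | defn : Name → Name → Name → Name → Proc → Proc → Proc
  deriving DecidableEq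

/-- A join definition `x⟨u⟩ ∥ y⟨v⟩ ▷ R`, as the tuple `(x, u, y, v, R)`. -/
abbrev JDef := Name × Name × Name × Name × Proc

/-- Defined variables of the join pattern of a definition. -/
def JDef.dv (D : JDef) : Finset Name := {D.1, D.2.2.1}

/-- Stacks over an alphabet `α`. -/
inductive Stack (α : Type) : Type
  | bot : Stack α
  | cons : α → Stack α → Stack α
  deriving DecidableEq

namespace Stack
variable {α : Type}
def push (s : Stack α) (e : α) : Stack α := cons e s
def pop : Stack α → Stack α
  | bot => bot
  | cons _ s => s
def top : Stack α → Option α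
  | bot => none
  | cons e _ => some e
end Stack

/-- Places: a message `x⟨v⟩` together with the scope stack of the sender name and
the scope stack of the sent name. -/
abbrev Place := (Name × Name) × Stack JDef × Stack JDef

set_option synthInstance.maxSize 1024 in
instance : DecidableEq Place :=
  inferInstanceAs (DecidableEq ((Name × Name) × Stack JDef × Stack JDef))

/-- Scope functions, mapping each name to a (renamed) name and its scope. -/
abbrev ScopeFun := Name → Name × Stack JDef

/-- The initial scope function `f_⊥`. -/
def fbot : ScopeFun := fun n => (n, Stack.bot)

/-- Pop a stack until the given name is a defined variable of the top definition
(by convention every name is in `dv(⊥)`, i.e. the empty stack is kept). This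
realizes the repeated applications of the scope-reducing operator `g` in the
decomposition of messages. -/
def popUntil (n : Name) : Stack JDef → Stack JDef
  | .bot => .bot
  | .cons D s => if n ∈ D.dv then .cons D s else popUntil n s

/-- The decomposition function `dec`, mapping a core join process and a scope
function to a finite set of places. -/
def dec : Proc → ScopeFun → Finset Place
  | .nil, _ => ∅
  | .msg x v, f =>
      {(((f x).1, (f v).1), popUntil (f x).1 (f x).2, popUntil (f v).1 (f v).2)}
  | .par P Q, f => dec P f ∪ dec Q f
  | .defn x u y v R P, f => dec P (fun n => ((f n).1, (f n).2.push (x, u, y, v, R)))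

/-- A net transition: preset, label (a join definition) and postset. -/
abbrev JTrans := Set Place × JDef × Set Place

/-- A labeled Petri net for the join semantics. -/
structure JNet where
  places : Set Place
  trans : Set JTrans
  m0 : Set Place

/-- The scope function `f_t` used to decompose the right-hand side of a reaction. -/
def ft (u v a b : Name) (s sa sb : Stack JDef) : ScopeFun :=
  fun n => if n = u then (a, sa) else if n = v then (b, sb) else (n, s)

/-- The transition rule: whenever two places carry messages matching the join
pattern of the definition on top of their (shared) sender-scope stack, the net
contains a corresponding transition, whose postset is the decomposition of the
right-hand side, is disjoint from the initial marking, and is produced by no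
other transition. -/
def TransRule (N : JNet) : Prop :=
  ∀ x a y b u v (R : Proc) (s sa sb : Stack JDef),
    (((x, a), s, sa) : Place) ∈ N.places → (((y, b), s, sb) : Place) ∈ N.places →
    s.top = some (x, u, y, v, R) →
    ∃ t ∈ N.trans,
      t.1 = {(((x, a), s, sa) : Place), ((y, b), s, sb)} ∧
      t.2.1 = (x, u, y, v, R) ∧
      t.2.2 = ↑(dec R (ft u v a b s sa sb)) ∧
      t.2.2 ∩ N.m0 = ∅ ∧
      ∀ p' ∈ t.2.2, ∀ t' ∈ N.trans, p' ∈ t'.2.2 → t' = t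

/-- `N` satisfies the defining conditions of the Petri net semantics of `J`. -/
def Sat (J : Proc) (N : JNet) : Prop :=
  N.m0 = ↑(dec J fbot) ∧ N.m0 ⊆ N.places ∧
  (∀ t ∈ N.trans, t.1 ⊆ N.places ∧ t.2.2 ⊆ N.places) ∧
  TransRule N

/-- `N` is the Petri net semantics `N(J)` of `J`: the smallest Petri net whose
initial marking is `dec(J, f_⊥)` and which satisfies the transition rule. -/
def IsSemantics (J : Proc) (N : JNet) : Prop :=
  Sat J N ∧ ∀ N', Sat J N' → N.places ⊆ N'.places ∧ N.trans ⊆ N'.trans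

/-- Enabledness of a transition under a marking. -/
def Enabled (m : Place → ℕ) (t : JTrans) : Prop := ∀ p ∈ t.1, 0 < m p

open Classical in
/-- The firing rule `m [t⟩ m'`. -/
noncomputable def Fires (m : Place → ℕ) (t : JTrans) (m' : Place → ℕ) : Prop :=
  Enabled m t ∧ ∀ p, m' p =
    if p ∈ t.2.2 \ t.1 then m p + 1
    else if p ∈ t.1 \ t.2.2 then m p - 1
    else m p

open Classical in
/-- The marking corresponding to a set of places (one token on each). -/
noncomputable def ind (S : Set Place) : Place → ℕ := fun p => if p ∈ S then 1 else 0

/-- Reachable markings of a join net. -/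
def JReach (N : JNet) (m : Place → ℕ) : Prop :=
  Relation.ReflTransGen (fun m₁ m₂ => ∃ t ∈ N.trans, Fires m₁ t m₂) (ind N.m0) m

/-! Every transition of `N(J)` has a nonempty preset, puts no token on an initially marked
place, and is the only producer of each place of its postset: the transitions with these
properties already form a net satisfying the defining conditions, so minimality of `N(J)`
excludes all others. For any net with these properties, record with a reachable marking the
list of transitions fired to reach it, and count the tokens each place has received in total
(initially or by firing). Tokens are conserved, so the marking is bounded by that count; and
the count never exceeds one: a transition `t` about to fire a second time must find a token
again on a preset place `q`, which then has received two tokens (a self-loop `q` never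
receives any, as `t` is its only producer). Hence only the first firing of the unique
producer of a place can deliver a token to it. -/

namespace JNet

structure WellFormedTrans (N : JNet) (t : JTrans) : Prop where
  preset_nonempty : t.1.Nonempty
  disjoint_postset_m0 : Disjoint t.2.2 N.m0
  eq_of_mem_postset : ∀ p ∈ t.2.2, ∀ t' ∈ N.trans, p ∈ t'.2.2 → t' = t

open Classical in
noncomputable def inflow (N : JNet) (l : List JTrans) (p : Place) : ℕ :=
  ind N.m0 p + l.countP (fun u => p ∈ u.2.2 \ u.1)

open Classical in
noncomputable def outflow (l : List JTrans) (p : Place) : ℕ :=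
  l.countP (fun u => p ∈ u.1 \ u.2.2)

/-- `l` lists the transitions fired, in any order, to reach `m` from the initial marking. -/
def IsHistory (N : JNet) (l : List JTrans) (m : Place → ℕ) : Prop :=
  (∀ u ∈ l, u ∈ N.trans) ∧ ∀ p, m p + outflow l p = N.inflow l p

variable {N : JNet} {l : List JTrans} {m m' : Place → ℕ} {t : JTrans} {p : Place}

lemma isHistory_nil : N.IsHistory [] (ind N.m0) :=
  ⟨by simp, fun p => by simp [inflow, outflow]⟩

lemma IsHistory.cons (hl : N.IsHistory l m) (ht : t ∈ N.trans) (hf : Fires m t m') :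
    N.IsHistory (t :: l) m' := by
  refine ⟨List.forall_mem_cons.2 ⟨ht, hl.1⟩, fun p => ?_⟩
  have hcons := hl.2 p
  have hm' := hf.2 p
  simp only [inflow, outflow, List.countP_cons] at hcons ⊢
  by_cases hin : p ∈ t.2.2 \ t.1
  · have hout : p ∉ t.1 \ t.2.2 := fun h => h.2 hin.1
    simp only [hin, hout, decide_true, decide_false, Bool.false_eq_true, if_true, if_false]
      at hm' ⊢
    omega
  · by_cases hout : p ∈ t.1 \ t.2.2
    · have := hf.1 p hout.1
      simp only [hin, hout, decide_true, decide_false, Bool.false_eq_true, if_true, if_false]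
        at hm' ⊢
      omega
    · simp only [hin, hout, if_false, decide_false, Bool.false_eq_true] at hm' ⊢
      omega

lemma inflow_eq_zero (hwf : N.WellFormedTrans t) (hl : ∀ u ∈ l, u ∈ N.trans)
    (hp : p ∈ t.2.2) (hfresh : t ∈ l → p ∈ t.1) : N.inflow l p = 0 := by
  have hp0 : p ∉ N.m0 := Set.disjoint_left.1 hwf.disjoint_postset_m0 hp
  simp only [inflow, ind, hp0, if_false, zero_add, List.countP_eq_zero, decide_eq_true_eq]
  rintro u hu ⟨hpu, hpu'⟩
  obtain rfl := hwf.eq_of_mem_postset p hp u (hl u hu) hpu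
  exact hpu' (hfresh hu)

lemma not_mem_of_enabled (hwf : N.WellFormedTrans t) (hl : N.IsHistory l m)
    (hsafe : ∀ p, N.inflow l p ≤ 1) (hen : Enabled m t) : t ∉ l := by
  intro ht
  obtain ⟨q, hq⟩ := hwf.preset_nonempty
  have hmq := hen q hq
  have hcons := hl.2 q
  by_cases hloop : q ∈ t.2.2
  · have := inflow_eq_zero hwf hl.1 hloop fun _ => hq
    omega
  · have : 0 < outflow l q := List.countP_pos_iff.2 ⟨t, ht, by simpa using ⟨hq, hloop⟩⟩
    have := hsafe q
    omega

lemma inflow_cons_le_one (hwf : N.WellFormedTrans t) (hl : N.IsHistory l m)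
    (hsafe : ∀ p, N.inflow l p ≤ 1) (hen : Enabled m t) (p : Place) :
    N.inflow (t :: l) p ≤ 1 := by
  have hfresh := not_mem_of_enabled hwf hl hsafe hen
  by_cases hin : p ∈ t.2.2 \ t.1
  · have := inflow_eq_zero hwf hl.1 hin.1 fun ht => absurd ht hfresh
    simp only [inflow, List.countP_cons, hin, decide_true, if_true] at this ⊢
    omega
  · simpa only [inflow, List.countP_cons, hin, decide_false, Bool.false_eq_true, if_false,
      add_zero] using hsafe p

lemma exists_history_of_reach (hwf : ∀ t ∈ N.trans, N.WellFormedTrans t) (hm : JReach N m) :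
    ∃ l, N.IsHistory l m ∧ ∀ p, N.inflow l p ≤ 1 := by
  induction hm with
  | refl => exact ⟨[], isHistory_nil, fun p => by unfold inflow ind; split_ifs <;> simp⟩
  | tail _ hstep ih =>
    obtain ⟨t, ht, hf⟩ := hstep
    obtain ⟨l, hl, hsafe⟩ := ih
    exact ⟨t :: l, hl.cons ht hf, inflow_cons_le_one (hwf t ht) hl hsafe hf.1⟩

theorem reach_le_one (hwf : ∀ t ∈ N.trans, N.WellFormedTrans t) (hm : JReach N m) (p : Place) :
    m p ≤ 1 := by
  obtain ⟨l, hl, hsafe⟩ := exists_history_of_reach hwf hm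
  have := hl.2 p
  have := hsafe p
  omega

end JNet

lemma IsSemantics.wellFormedTrans {J : Proc} {N : JNet} (h : IsSemantics J N) :
    ∀ t ∈ N.trans, N.WellFormedTrans t := by
  obtain ⟨⟨hm0, hm0_sub, hsub, hrule⟩, hmin⟩ := h
  let N' : JNet := ⟨N.places, {t ∈ N.trans | N.WellFormedTrans t}, N.m0⟩
  have hsat : Sat J N' := by
    refine ⟨hm0, hm0_sub, fun t ht => hsub t ht.1, ?_⟩
    intro x a y b u v R s sa sb hx hy htop
    obtain ⟨t, ht, hpre, hlab, hpost, hdisj, huniq⟩ := hrule x a y b u v R s sa sb hx hy htop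
    have hwf : N.WellFormedTrans t :=
      ⟨by simp [hpre], Set.disjoint_iff_inter_eq_empty.2 hdisj, huniq⟩
    exact ⟨t, ⟨ht, hwf⟩, hpre, hlab, hpost, hdisj, fun p hp t' ht' => huniq p hp t' ht'.1⟩
  exact fun t ht => ((hmin N' hsat).2 ht).2

/-- The Petri net semantics of every core join process is 1-safe: every reachable
marking assigns at most one token to each place. -/
theorem semantics_one_safe (J : Proc) (N : JNet) (h : IsSemantics J N) :
    ∀ m, JReach N m → ∀ p, m p ≤ 1 :=
  fun _ hm => JNet.reach_le_one h.wellFormedTrans hm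
end

section
/- Every fully reachable M-structure in the Petri net semantics N(J) of a core join process J is local: if transitions t₁, t₂, t₃ of N(J) satisfy •t₁ ∩ •t₂ ≠ ∅ and •t₂ ∩ •t₃ ≠ ∅ (with t₁ ≠ t₂, t₂ ≠ t₃, t₁ ≠ t₃ and •t₁ ∩ •t₃ = ∅, forming an M), then l(t₁) = l(t₂) = l(t₃). -/
/-! `N(J)` is the least net satisfying the transition rule, and that rule only creates
transitions whose label is the top of the sender-scope stack shared by their input places.
Discarding all other transitions therefore leaves a net that still satisfies the rule, so by
minimality every transition of `N(J)` has this property. Two transitions with a common input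
place then carry the same label. -/

def JTrans.LabelIsTop (t : JTrans) : Prop := ∀ p ∈ t.1, p.2.1.top = some t.2.1

def JNet.filterTrans (N : JNet) (P : JTrans → Prop) : JNet :=
  { N with trans := {t ∈ N.trans | P t} }

lemma Sat.filterTrans {J : Proc} {N : JNet} {P : JTrans → Prop} (hN : Sat J N)
    (hP : TransRule (N.filterTrans P)) : Sat J (N.filterTrans P) :=
  ⟨hN.1, hN.2.1, fun t ht => hN.2.2.1 t ht.1, hP⟩

lemma IsSemantics.forall_trans {J : Proc} {N : JNet} {P : JTrans → Prop} (h : IsSemantics J N)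
    (hP : TransRule (N.filterTrans P)) : ∀ t ∈ N.trans, P t :=
  fun _ ht => ((h.2 _ (h.1.filterTrans hP)).2 ht).2

lemma TransRule.filterTrans_labelIsTop {N : JNet} (hN : TransRule N) :
    TransRule (N.filterTrans JTrans.LabelIsTop) := by
  intro x a y b u v R s sa sb hp hq htop
  obtain ⟨t, ht, hpre, hlab, hpost, hdisj, huniq⟩ := hN x a y b u v R s sa sb hp hq htop
  have hgood : t.LabelIsTop := by
    intro p hp
    rw [hpre] at hp
    rcases hp with rfl | rfl <;> rwa [hlab]
  exact ⟨t, ⟨ht, hgood⟩, hpre, hlab, hpost, hdisj,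
    fun p' hp' t' ht' hp't' => huniq p' hp' t' ht'.1 hp't'⟩

lemma IsSemantics.labelIsTop {J : Proc} {N : JNet} (h : IsSemantics J N) :
    ∀ t ∈ N.trans, t.LabelIsTop :=
  h.forall_trans h.1.2.2.2.filterTrans_labelIsTop

lemma IsSemantics.label_eq_of_mem_inter {J : Proc} {N : JNet} (h : IsSemantics J N)
    {t t' : JTrans} (ht : t ∈ N.trans) (ht' : t' ∈ N.trans) (hne : (t.1 ∩ t'.1).Nonempty) :
    t.2.1 = t'.2.1 := by
  obtain ⟨p, hp, hp'⟩ := hne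
  exact Option.some_injective _ ((h.labelIsTop t ht p hp).symm.trans (h.labelIsTop t' ht' p hp'))

theorem M_is_local_general (J : Proc) (N : JNet) (h : IsSemantics J N)
    (t1 t2 t3 : JTrans) (h1 : t1 ∈ N.trans) (h2 : t2 ∈ N.trans) (h3 : t3 ∈ N.trans)
    (o12 : (t1.1 ∩ t2.1).Nonempty) (o23 : (t2.1 ∩ t3.1).Nonempty) :
    t1.2.1 = t2.2.1 ∧ t2.2.1 = t3.2.1 :=
  ⟨h.label_eq_of_mem_inter h1 h2 o12, h.label_eq_of_mem_inter h2 h3 o23⟩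

/-- Every fully reachable M-structure in the Petri net semantics `N(J)` is local:
three pairwise distinct transitions forming an M (the outer two have disjoint
presets, each overlapping the middle one's preset) all carry the same label. -/
theorem M_is_local (J : Proc) (N : JNet) (h : IsSemantics J N)
    (t1 t2 t3 : JTrans) (h1 : t1 ∈ N.trans) (h2 : t2 ∈ N.trans) (h3 : t3 ∈ N.trans)
    (h12 : t1 ≠ t2) (h23 : t2 ≠ t3) (h13 : t1 ≠ t3)
    (o12 : (t1.1 ∩ t2.1).Nonempty) (o23 : (t2.1 ∩ t3.1).Nonempty)
    (d13 : t1.1 ∩ t3.1 = ∅) :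
    t1.2.1 = t2.2.1 ∧ t2.2.1 = t3.2.1 :=
  M_is_local_general J N h t1 t2 t3 h1 h2 h3 o12 o23
end
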